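/- (Inner products of box splines, Dahmen–Micchelli.) Let E = (v₁, …, vₙ) and F = (w₁, …, w_m) be two lists of vectors in ℝ^d with n ≥ d, m ≥ d, such that v₁, …, v_d are linearly independent and w₁, …, w_d are linearly independent, and let m_E = (v₁ + ⋯ + vₙ)/2. Then for Lebesgue-almost every y ∈ ℝ^d, ∫_{ℝ^d} M_E(x) · M_F(x + y) dx = M_{E++F}(2 m_E + y), where E ++ F denotes the concatenated list (v₁, …, vₙ, w₁, …, w_m). -/

import Mathlib

/-!
The box spline `M_v` of a list `v = (v₁, …, vₙ)` is the density of the image `boxMeasure v` of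
Lebesgue measure on `[0,1]ⁿ` under `t ↦ ∑ tᵢ vᵢ`: for `n = d` this is the change of variables
formula for the linear map sending the unit cube onto the parallelepiped of `v₁, …, v_d`, and each
further step of the recursion convolves with the uniform measure on the segment `[0, vₙ]`.
Splitting the cube `[0,1]^(n+m)` as `[0,1]ⁿ × [0,1]ᵐ` gives
`boxMeasure (E ++ F) = boxMeasure E ∗ boxMeasure F`, hence `M_E ⋆ M_F = M_{E++F}` almost
everywhere. The substitution `t ↦ 1 - t` shows that `boxMeasure E` is symmetric about `m_E`, so
`M_E(2 m_E - x) = M_E(x)` for a.e. `x`; substituting this into `∫ M_E(x) M_F(x + y) dx` turns it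
into the convolution `(M_E ⋆ M_F)(2 m_E + y)`.
-/

open MeasureTheory

open scoped Classical in
/-- The box spline `M_{v₁,…,vₙ}` with direction vectors given by the list `v` in `ℝ^d`
(represented as `Fin d → ℝ`), defined recursively: when the list has length `≤ d`
(base case, length `= d` in intended use) it is the normalized indicator of the
parallelepiped spanned by the first `d` vectors, scaled by `1/|det[v₁ ⋯ v_d]|`;
otherwise one integrates out the last direction vector over `[0,1]`. -/
noncomputable def boxSpline (d : ℕ) (v : List (Fin d → ℝ)) : (Fin d → ℝ) → ℝ :=
  if _h : v.length ≤ d then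
    fun x =>
      if ∃ t : Fin d → ℝ, (∀ k, t k ∈ Set.Icc (0 : ℝ) 1) ∧ x = ∑ k, t k • v.getD k.val 0 then
        |Matrix.det (Matrix.of fun i j : Fin d => v.getD j.val 0 i)|⁻¹
      else 0
  else
    fun x => ∫ t in (0 : ℝ)..1, boxSpline d v.dropLast (x - t • v.getLastD 0)
termination_by v.length
decreasing_by
  simp only [List.length_dropLast]
  omega

open Set
open scoped ENNReal

section Translation

variable {G : Type*} [MeasurableSpace G] [AddCommGroup G] [MeasurableNeg G] {μ : Measure G}
  [μ.IsAddLeftInvariant]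

theorem withDensity_lintegral_sub_eq_conv [MeasurableAdd₂ G] [SFinite μ] {f : G → ℝ≥0∞}
    (hf : Measurable f) (ν : Measure G) [SFinite ν] :
    μ.withDensity (fun x => ∫⁻ y, f (x - y) ∂ν) = μ.withDensity f ∗ ν := by
  have hf₂ : Measurable fun p : G × G => f (p.1 - p.2) := hf.comp measurable_sub
  refine Measure.ext_of_lintegral _ fun φ hφ => ?_
  have hconv : Measurable fun x => ∫⁻ y, f (x - y) ∂ν := hf₂.lintegral_prod_right'
  have hφ₂ : Measurable fun x => ∫⁻ y, φ (x + y) ∂ν :=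
    (hφ.comp measurable_add).lintegral_prod_right'
  rw [Measure.lintegral_conv hφ, lintegral_withDensity_eq_lintegral_mul _ hconv hφ,
    lintegral_withDensity_eq_lintegral_mul _ hf hφ₂]
  calc ∫⁻ x, (∫⁻ y, f (x - y) ∂ν) * φ x ∂μ
      = ∫⁻ x, ∫⁻ y, f (x - y) * φ x ∂ν ∂μ :=
        lintegral_congr fun x => (lintegral_mul_const _ (hf₂.comp measurable_prodMk_left)).symm
    _ = ∫⁻ y, ∫⁻ x, f (x - y) * φ x ∂μ ∂ν :=
        lintegral_lintegral_swap (hf₂.mul (hφ.comp measurable_fst)).aemeasurable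
    _ = ∫⁻ y, ∫⁻ x, f x * φ (x + y) ∂μ ∂ν := by
        congr! 2 with y
        simpa using (lintegral_add_right_eq_self (μ := μ) (fun x => f (x - y) * φ x) y).symm
    _ = ∫⁻ x, ∫⁻ y, f x * φ (x + y) ∂ν ∂μ :=
        (lintegral_lintegral_swap ((hf.comp measurable_fst).mul
          (hφ.comp measurable_add)).aemeasurable).symm
    _ = ∫⁻ x, f x * ∫⁻ y, φ (x + y) ∂ν ∂μ :=
        lintegral_congr fun x =>
          lintegral_const_mul _ ((hφ.comp measurable_add).comp measurable_prodMk_left)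

theorem withDensity_const_sub_eq_map [MeasurableAdd G] [μ.IsNegInvariant] {f : G → ℝ≥0∞}
    (hf : Measurable f) (a : G) :
    μ.withDensity (fun x => f (a - x)) = (μ.withDensity f).map (a - ·) := by
  have hsub : Measurable (a - · : G → G) := measurable_const_sub a
  refine Measure.ext_of_lintegral _ fun φ hφ => ?_
  have hφsub : Measurable fun x => φ (a - x) := hφ.comp hsub
  have hfsub : Measurable fun x => f (a - x) := hf.comp hsub
  rw [lintegral_map hφ hsub, lintegral_withDensity_eq_lintegral_mul _ hf hφsub,
    lintegral_withDensity_eq_lintegral_mul _ hfsub hφ]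
  simpa using (lintegral_sub_left_eq_self (μ := μ) (fun x => f (a - x) * φ x) a).symm

end Translation

theorem List.getD_append_finSumFinEquiv {α : Type*} (l₁ l₂ : List α) (a : α)
    (i : Fin l₁.length ⊕ Fin l₂.length) :
    (l₁ ++ l₂).getD (finSumFinEquiv i) a =
      Sum.elim (fun j : Fin l₁.length => l₁.getD j a) (fun j : Fin l₂.length => l₂.getD j a)
        i := by
  rcases i with i | i
  · simp [List.getElem?_append_left i.isLt]
  · simp

theorem List.sum_getD_fin {M : Type*} [AddCommMonoid M] (l : List M) :
    ∑ i : Fin l.length, l.getD i 0 = l.sum := by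
  conv_rhs => rw [← List.ofFn_getElem (xs := l)]
  rw [List.sum_ofFn]
  exact Finset.sum_congr rfl fun i _ => List.getD_eq_getElem _ _ i.isLt

section BoxMeasure

variable {ι ι' E : Type*} [Fintype ι] [Fintype ι'] [NormedAddCommGroup E] [NormedSpace ℝ E]
  [MeasurableSpace E] [BorelSpace E]

noncomputable def boxMeasure (v : ι → E) : Measure E :=
  (volume.restrict (Icc (0 : ι → ℝ) 1)).map (Fintype.linearCombination ℝ v)

theorem measurable_fintypeLinearCombination (v : ι → E) :
    Measurable (Fintype.linearCombination ℝ v) :=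
  (Fintype.linearCombination ℝ v).continuous_of_finiteDimensional.measurable

theorem measurableSet_parallelepiped (v : ι → E) : MeasurableSet (parallelepiped v) :=
  (isCompact_Icc.image
    (Fintype.linearCombination ℝ v).continuous_of_finiteDimensional).measurableSet

instance (v : ι → E) : IsProbabilityMeasure (boxMeasure v) :=
  have : IsProbabilityMeasure (volume.restrict (Icc (0 : ι → ℝ) 1)) :=
    ⟨by simp [Real.volume_Icc_pi]⟩
  Measure.isProbabilityMeasure_map (measurable_fintypeLinearCombination v).aemeasurable

theorem boxMeasure_comp_equiv (v : ι → E) (e : ι' ≃ ι) : boxMeasure (v ∘ e) = boxMeasure v := by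
  let K := MeasurableEquiv.piCongrLeft (fun _ : ι => ℝ) e
  have hK : MeasurePreserving K := volume_measurePreserving_piCongrLeft _ e
  have hpre : K ⁻¹' Icc 0 1 = Icc 0 1 := by
    simp only [K, MeasurableEquiv.coe_piCongrLeft, ← pi_univ_Icc,
      Equiv.piCongrLeft_preimage_univ_pi, Pi.zero_apply, Pi.one_apply]
  have hcomp : ⇑(Fintype.linearCombination ℝ (v ∘ e)) = Fintype.linearCombination ℝ v ∘ K := by
    ext t
    simp [K, Fintype.linearCombination_apply, ← e.sum_comp,
      MeasurableEquiv.piCongrLeft_apply_apply (β := fun _ => ℝ)]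
  rw [boxMeasure, boxMeasure, hcomp, ← Measure.map_map (measurable_fintypeLinearCombination v)
    K.measurable, ← hpre, (hK.restrict_preimage_emb K.measurableEmbedding _).map_eq]

theorem boxMeasure_sumElim [SecondCountableTopology E] (u : ι → E) (w : ι' → E) :
    boxMeasure (Sum.elim u w) = boxMeasure u ∗ boxMeasure w := by
  let K := MeasurableEquiv.sumPiEquivProdPi (fun _ : ι ⊕ ι' => ℝ)
  have hK : MeasurePreserving K := volume_measurePreserving_sumPiEquivProdPi _
  have hpre : K ⁻¹' (Icc 0 1 ×ˢ Icc 0 1) = Icc 0 1 := by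
    ext t
    simp [K, MeasurableEquiv.coe_sumPiEquivProdPi, Equiv.sumPiEquivProdPi, Pi.le_def,
      Sum.forall]
  have hcomp : ⇑(Fintype.linearCombination ℝ (Sum.elim u w)) =
      ((fun p : E × E => p.1 + p.2) ∘ Prod.map (Fintype.linearCombination ℝ u)
        (Fintype.linearCombination ℝ w)) ∘ K := by
    ext t
    simp [K, Fintype.linearCombination_apply, Fintype.sum_sum_type,
      MeasurableEquiv.coe_sumPiEquivProdPi, Equiv.sumPiEquivProdPi]
  have hL := (measurable_fintypeLinearCombination u).prodMap (measurable_fintypeLinearCombination w)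
  rw [boxMeasure, boxMeasure, boxMeasure, Measure.conv, Measure.map_prod_map _ _
    (measurable_fintypeLinearCombination u) (measurable_fintypeLinearCombination w),
    Measure.map_map measurable_add hL, Measure.prod_restrict, ← Measure.volume_eq_prod, hcomp,
    ← Measure.map_map (measurable_add.comp hL) K.measurable, ← hpre,
    (hK.restrict_preimage_emb K.measurableEmbedding _).map_eq]

theorem boxMeasure_of_unique [Unique ι] (v : ι → E) :
    boxMeasure v = (volume.restrict (Icc (0 : ℝ) 1)).map (· • v default) := by
  obtain rfl : ‹Fintype ι› = Unique.fintype := Subsingleton.elim _ _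
  let K := MeasurableEquiv.funUnique ι ℝ
  have hK : MeasurePreserving K := volume_preserving_funUnique ι ℝ
  have hpre : K ⁻¹' Icc 0 1 = Icc 0 1 := by
    ext t
    simp [K, Pi.le_def, Unique.forall_iff]
  have hcomp : ⇑(Fintype.linearCombination ℝ v) = (· • v default) ∘ K := by
    ext t
    simp [K, Fintype.linearCombination_apply]
  rw [boxMeasure, hcomp, ← Measure.map_map (by fun_prop) K.measurable, ← hpre,
    (hK.restrict_preimage_emb K.measurableEmbedding _).map_eq]

theorem map_sum_sub_boxMeasure (v : ι → E) : (boxMeasure v).map (∑ i, v i - ·) = boxMeasure v := by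
  let R : (ι → ℝ) → (ι → ℝ) := (1 - ·)
  have hR : MeasurePreserving R (volume.restrict (Icc 0 1)) (volume.restrict (Icc 0 1)) := by
    have := (Measure.measurePreserving_sub_left volume (1 : ι → ℝ)).restrict_preimage_emb
      (MeasurableEquiv.subLeft (1 : ι → ℝ)).measurableEmbedding (Icc 0 1)
    rwa [preimage_const_sub_Icc, sub_zero, sub_self] at this
  have hcomp :
      (∑ i, v i - ·) ∘ Fintype.linearCombination ℝ v = Fintype.linearCombination ℝ v ∘ R := by
    ext t
    simp [R, Fintype.linearCombination_apply, sub_smul]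
  rw [boxMeasure, Measure.map_map (measurable_const_sub _) (measurable_fintypeLinearCombination v),
    hcomp, ← Measure.map_map (measurable_fintypeLinearCombination v) hR.measurable, hR.map_eq]

theorem boxMeasure_getD_append [SecondCountableTopology E] (l₁ l₂ : List E) :
    boxMeasure (fun i : Fin (l₁ ++ l₂).length => (l₁ ++ l₂).getD i 0) =
      boxMeasure (fun i : Fin l₁.length => l₁.getD i 0) ∗
        boxMeasure (fun i : Fin l₂.length => l₂.getD i 0) := by
  rw [← boxMeasure_sumElim,
    ← boxMeasure_comp_equiv _ (finSumFinEquiv.trans (finCongr List.length_append.symm))]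
  congr 1
  funext i
  exact List.getD_append_finSumFinEquiv l₁ l₂ 0 i

end BoxMeasure

section BoxSpline

variable {d : ℕ}

theorem boxSpline_of_length_le {v : List (Fin d → ℝ)} (hv : v.length ≤ d) :
    boxSpline d v = (parallelepiped fun i : Fin d => v.getD i 0).indicator
      fun _ => |Matrix.det (Matrix.of fun i j : Fin d => v.getD j 0 i)|⁻¹ := by
  classical
  ext x
  rw [boxSpline, dif_pos hv, indicator_apply, mem_parallelepiped_iff]
  simp only [mem_Icc, Pi.le_def, forall_and, Pi.zero_apply, Pi.one_apply]

theorem boxSpline_append_singleton {w : List (Fin d → ℝ)} (hw : d ≤ w.length) (c x : Fin d → ℝ) :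
    boxSpline d (w ++ [c]) x = ∫ t in (0 : ℝ)..1, boxSpline d w (x - t • c) := by
  rw [boxSpline, dif_neg (by simp; omega), List.dropLast_concat, List.getLastD_concat]

theorem boxSpline_induction_on {P : List (Fin d → ℝ) → Prop} (v : List (Fin d → ℝ))
    (base : ∀ v : List (Fin d → ℝ), v.length ≤ d → P v)
    (step : ∀ (w : List (Fin d → ℝ)) (c : Fin d → ℝ), d ≤ w.length → P w → P (w ++ [c])) :
    P v := by
  induction v using List.reverseRecOn with
  | nil => exact base [] (Nat.zero_le d)
  | append_singleton w c ih =>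
    by_cases h : (w ++ [c]).length ≤ d
    · exact base _ h
    · exact step w c (by simp at h; omega) ih

theorem boxSpline_nonneg (v : List (Fin d → ℝ)) (x : Fin d → ℝ) : 0 ≤ boxSpline d v x := by
  induction v using boxSpline_induction_on generalizing x with
  | base v hv =>
    rw [boxSpline_of_length_le hv]
    exact indicator_nonneg (fun _ _ => inv_nonneg.2 (abs_nonneg _)) x
  | step w c hw ih =>
    rw [boxSpline_append_singleton hw]
    exact intervalIntegral.integral_nonneg zero_le_one fun t _ => ih _

theorem measurable_boxSpline (v : List (Fin d → ℝ)) : Measurable (boxSpline d v) := by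
  induction v using boxSpline_induction_on with
  | base v hv =>
    rw [boxSpline_of_length_le hv]
    exact measurable_const.indicator (measurableSet_parallelepiped _)
  | step w c hw ih =>
    simp_rw [funext (boxSpline_append_singleton hw c), intervalIntegral.integral_of_le zero_le_one]
    exact (ih.comp (measurable_fst.sub (measurable_snd.smul_const c))).stronglyMeasurable
      |>.integral_prod_right'.measurable

theorem boxSpline_le (v : List (Fin d → ℝ)) (x : Fin d → ℝ) :
    boxSpline d v x ≤ |Matrix.det (Matrix.of fun i j : Fin d => v.getD j 0 i)|⁻¹ := by
  induction v using boxSpline_induction_on generalizing x with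
  | base v hv =>
    rw [boxSpline_of_length_le hv]
    exact indicator_le_self' (fun _ _ => inv_nonneg.2 (abs_nonneg _)) x
  | step w c hw ih =>
    have hdet : (Matrix.of fun i j : Fin d => (w ++ [c]).getD j 0 i) =
        Matrix.of fun i j : Fin d => w.getD j 0 i := by
      ext i j
      rw [Matrix.of_apply, Matrix.of_apply, List.getD_append _ _ _ _ (j.isLt.trans_le hw)]
    rw [boxSpline_append_singleton hw, hdet]
    have hbound : ∀ t ∈ uIoc (0 : ℝ) 1, ‖boxSpline d w (x - t • c)‖ ≤
        |Matrix.det (Matrix.of fun i j : Fin d => w.getD j 0 i)|⁻¹ := fun t _ => by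
      rw [Real.norm_eq_abs, abs_of_nonneg (boxSpline_nonneg w _)]
      exact ih _
    simpa using (le_abs_self _).trans (intervalIntegral.norm_integral_le_of_norm_le_const hbound)

theorem withDensity_boxSpline_of_length_eq {v : List (Fin d → ℝ)} (hv : v.length = d)
    (hli : LinearIndependent ℝ fun i : Fin d => v.getD i 0) :
    volume.withDensity (fun x => ENNReal.ofReal (boxSpline d v x)) =
      boxMeasure fun i : Fin v.length => v.getD i 0 := by
  set e : Fin d → Fin d → ℝ := fun i => v.getD i 0
  set A := Fintype.linearCombination ℝ e
  have hinj : Function.Injective A := hli.fintypeLinearCombination_injective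
  have hdet : LinearMap.det A ≠ 0 := (LinearEquiv.ofInjectiveEndo A hinj).isUnit_det'.ne_zero
  have hmat : LinearMap.toMatrix' A = Matrix.of fun i j : Fin d => v.getD j 0 i := by
    ext i j
    simp [A, e, LinearMap.toMatrix'_apply, Fintype.linearCombination_apply_single]
  have hP : parallelepiped e = A '' Icc 0 1 := rfl
  have hdensity : (fun x => ENNReal.ofReal (boxSpline d v x)) = (parallelepiped e).indicator
      fun _ => ENNReal.ofReal |(LinearMap.det A)⁻¹| := by
    funext x
    rw [boxSpline_of_length_le hv.le, ← LinearMap.det_toMatrix', hmat, abs_inv]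
    change ENNReal.ofReal ((parallelepiped e).indicator _ x) = _
    by_cases hx : x ∈ parallelepiped e <;> simp [hx]
  rw [show (fun i : Fin v.length => v.getD i 0) = e ∘ finCongr hv from rfl,
    boxMeasure_comp_equiv, hdensity,
    withDensity_indicator (measurableSet_parallelepiped e), withDensity_const, boxMeasure,
    ← Measure.restrict_smul, ← Real.map_linearMap_volume_pi_eq_smul_volume_pi hdet, hP,
    Measure.restrict_map A.continuous_of_finiteDimensional.measurable
      (hP ▸ measurableSet_parallelepiped e), preimage_image_eq _ hinj]

theorem withDensity_boxSpline_append_singleton {w : List (Fin d → ℝ)} (hw : d ≤ w.length)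
    (c : Fin d → ℝ) :
    volume.withDensity (fun x => ENNReal.ofReal (boxSpline d (w ++ [c]) x)) =
      volume.withDensity (fun x => ENNReal.ofReal (boxSpline d w x)) ∗
        (volume.restrict (Icc (0 : ℝ) 1)).map (· • c) := by
  have hψ := (measurable_boxSpline w).ennreal_ofReal
  rw [← withDensity_lintegral_sub_eq_conv hψ]
  congr 1
  funext x
  have hmeas : Measurable fun t : ℝ => boxSpline d w (x - t • c) :=
    (measurable_boxSpline w).comp (measurable_const.sub (measurable_id.smul_const c))
  have hint : IntegrableOn (fun t : ℝ => boxSpline d w (x - t • c)) (Ioc 0 1) :=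
    Measure.integrableOn_of_bounded (by simp) hmeas.aestronglyMeasurable
      (ae_of_all _ fun t => by
        rw [Real.norm_eq_abs, abs_of_nonneg (boxSpline_nonneg w _)]
        exact boxSpline_le w _)
  have hψx : Measurable fun y => ENNReal.ofReal (boxSpline d w (x - y)) :=
    hψ.comp (measurable_const.sub measurable_id)
  rw [boxSpline_append_singleton hw, intervalIntegral.integral_of_le zero_le_one,
    ofReal_integral_eq_lintegral_ofReal hint (ae_of_all _ fun t => boxSpline_nonneg w _),
    lintegral_map hψx (by fun_prop), Measure.restrict_congr_set Ioc_ae_eq_Icc]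

theorem withDensity_boxSpline {v : List (Fin d → ℝ)} (hv : d ≤ v.length)
    (hli : LinearIndependent ℝ fun i : Fin d => v.getD i 0) :
    volume.withDensity (fun x => ENNReal.ofReal (boxSpline d v x)) =
      boxMeasure fun i : Fin v.length => v.getD i 0 := by
  induction v using boxSpline_induction_on with
  | base v hv' => exact withDensity_boxSpline_of_length_eq (le_antisymm hv' hv) hli
  | step w c hw ih =>
    have hliw : LinearIndependent ℝ fun i : Fin d => w.getD i 0 := by
      convert hli using 2 with i
      exact (List.getD_append _ _ _ _ (i.isLt.trans_le hw)).symm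
    let : Unique (Fin [c].length) := inferInstanceAs (Unique (Fin 1))
    rw [withDensity_boxSpline_append_singleton hw, ih hw hliw, boxMeasure_getD_append,
      boxMeasure_of_unique (fun i : Fin [c].length => [c].getD i 0)]
    rfl

theorem integrable_boxSpline {v : List (Fin d → ℝ)} (hv : d ≤ v.length)
    (hli : LinearIndependent ℝ fun i : Fin d => v.getD i 0) : Integrable (boxSpline d v) := by
  refine ⟨(measurable_boxSpline v).aestronglyMeasurable, ?_⟩
  rw [hasFiniteIntegral_iff_ofReal (ae_of_all _ (boxSpline_nonneg v)), ← setLIntegral_univ,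
    ← withDensity_apply _ MeasurableSet.univ, withDensity_boxSpline hv hli]
  exact measure_lt_top _ _

theorem boxSpline_sum_sub_ae_eq {v : List (Fin d → ℝ)} (hv : d ≤ v.length)
    (hli : LinearIndependent ℝ fun i : Fin d => v.getD i 0) :
    (fun x => boxSpline d v (v.sum - x)) =ᵐ[volume] boxSpline d v := by
  have hψ := (measurable_boxSpline v).ennreal_ofReal
  have hψsub : Measurable fun x => ENNReal.ofReal (boxSpline d v (v.sum - x)) :=
    hψ.comp (measurable_const_sub _)
  have h : (fun x => ENNReal.ofReal (boxSpline d v (v.sum - x))) =ᵐ[volume]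
      fun x => ENNReal.ofReal (boxSpline d v x) := by
    rw [← withDensity_eq_iff_of_sigmaFinite hψsub.aemeasurable hψ.aemeasurable,
      withDensity_const_sub_eq_map hψ, withDensity_boxSpline hv hli, ← List.sum_getD_fin,
      map_sum_sub_boxMeasure]
  filter_upwards [h] with x hx
  exact (ENNReal.ofReal_eq_ofReal_iff (boxSpline_nonneg _ _) (boxSpline_nonneg _ _)).1 hx

theorem ofReal_integral_boxSpline_mul_boxSpline_add {E : List (Fin d → ℝ)} (hE : d ≤ E.length)
    (hli : LinearIndependent ℝ fun i : Fin d => E.getD i 0) (F : List (Fin d → ℝ))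
    (y : Fin d → ℝ) :
    ENNReal.ofReal (∫ x, boxSpline d E x * boxSpline d F (x + y)) =
      ((fun x => ENNReal.ofReal (boxSpline d E x)) ⋆ₗ
        fun x => ENNReal.ofReal (boxSpline d F x)) (E.sum + y) := by
  have hint : Integrable fun x => boxSpline d E x * boxSpline d F (x + y) :=
    (integrable_boxSpline hE hli).mul_bdd
      ((measurable_boxSpline F).comp (measurable_add_const y)).aestronglyMeasurable
      (ae_of_all _ fun x => by
        rw [Real.norm_eq_abs, abs_of_nonneg (boxSpline_nonneg F _)]
        exact boxSpline_le F _)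
  rw [ofReal_integral_eq_lintegral_ofReal hint
    (ae_of_all _ fun x => mul_nonneg (boxSpline_nonneg E x) (boxSpline_nonneg F _)),
    lconvolution_def]
  calc ∫⁻ x, ENNReal.ofReal (boxSpline d E x * boxSpline d F (x + y))
      = ∫⁻ x, ENNReal.ofReal (boxSpline d E (E.sum - x)) *
          ENNReal.ofReal (boxSpline d F (x + y)) := by
        refine lintegral_congr_ae ?_
        filter_upwards [boxSpline_sum_sub_ae_eq hE hli] with x hx
        rw [hx, ENNReal.ofReal_mul (boxSpline_nonneg E x)]
    _ = ∫⁻ z, ENNReal.ofReal (boxSpline d E z) *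
          ENNReal.ofReal (boxSpline d F (-z + (E.sum + y))) := by
        rw [← lintegral_sub_left_eq_self _ E.sum]
        refine lintegral_congr fun z => ?_
        rw [sub_sub_cancel, show E.sum - z + y = -z + (E.sum + y) by abel]

end BoxSpline

theorem boxSpline_inner_product_general
    (d : ℕ)
    (E F : List (Fin d → ℝ)) (hE : d ≤ E.length) (hF : d ≤ F.length)
    (hliE : LinearIndependent ℝ (fun i : Fin d => E.getD i.val 0))
    (hliF : LinearIndependent ℝ (fun i : Fin d => F.getD i.val 0))
    (mE : Fin d → ℝ) (hmE : mE = (2 : ℝ)⁻¹ • E.sum) :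
    ∀ᵐ y : Fin d → ℝ ∂volume,
      ∫ x, boxSpline d E x * boxSpline d F (x + y) =
        boxSpline d (E ++ F) ((2 : ℝ) • mE + y) := by
  have hψ (v : List (Fin d → ℝ)) := (measurable_boxSpline v).ennreal_ofReal
  have hliEF : LinearIndependent ℝ fun i : Fin d => (E ++ F).getD i 0 := by
    convert hliE using 2 with i
    exact List.getD_append _ _ _ _ (i.isLt.trans_le hE)
  have hconv : (fun x => ENNReal.ofReal (boxSpline d E x)) ⋆ₗ
      (fun x => ENNReal.ofReal (boxSpline d F x)) =ᵐ[volume]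
        fun x => ENNReal.ofReal (boxSpline d (E ++ F) x) := by
    rw [← withDensity_eq_iff_of_sigmaFinite
      (measurable_lconvolution _ (hψ E) (hψ F)).aemeasurable (hψ _).aemeasurable,
      ← conv_withDensity_eq_lconvolution (hψ E) (hψ F), withDensity_boxSpline hE hliE,
      withDensity_boxSpline hF hliF, withDensity_boxSpline (by simp; omega) hliEF,
      boxMeasure_getD_append]
  have hshift := (measurePreserving_add_left volume E.sum).quasiMeasurePreserving.ae_eq_comp hconv
  rw [hmE, smul_inv_smul₀ two_ne_zero]
  filter_upwards [hshift] with y hy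
  rw [← ENNReal.ofReal_eq_ofReal_iff (integral_nonneg fun x => mul_nonneg
    (boxSpline_nonneg E x) (boxSpline_nonneg F _)) (boxSpline_nonneg _ _),
    ofReal_integral_boxSpline_mul_boxSpline_add hE hliE F y]
  exact hy

/-- Dahmen–Micchelli: inner products of box splines. With
`m_E = (v₁ + ⋯ + vₙ)/2`, for Lebesgue-a.e. `y`,
`∫ M_E(x) M_F(x + y) dx = M_{E++F}(2 m_E + y)`. -/
theorem boxSpline_inner_product
    (d : ℕ) (hd : 1 ≤ d)
    (E F : List (Fin d → ℝ)) (hE : d ≤ E.length) (hF : d ≤ F.length)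
    (hliE : LinearIndependent ℝ (fun i : Fin d => E.getD i.val 0))
    (hliF : LinearIndependent ℝ (fun i : Fin d => F.getD i.val 0))
    (mE : Fin d → ℝ) (hmE : mE = (2 : ℝ)⁻¹ • E.sum) :
    ∀ᵐ y : Fin d → ℝ ∂volume,
      ∫ x, boxSpline d E x * boxSpline d F (x + y) =
        boxSpline d (E ++ F) ((2 : ℝ) • mE + y) :=
  boxSpline_inner_product_general d E F hE hF hliE hliF mE hmE
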